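/- arXiv:2010.14916 — 7 statements merged into one kernel-verified Lean document; each statement's English description precedes it below -/
import Mathlib

section
/- For all integers d > 1, m ≥ d and x with m ≤ x ≤ m², there exists a finite connected simple graph G with a distinguished vertex s such that G has exactly 1 + d + m vertices and exactly d + m + min(x, m(m−1)/2) edges, the eccentricity of s in G equals d, and the ball B_d(G,s) equals G (i.e., every vertex of G is at distance at most d from s and every edge of G has at least one endpoint at distance strictly less than d from s). -/
/-! The path `s, a_1, …, a_d` puts `a_d` at distance `d` from `s`, while every `b_j` is at
distance `1`; since `d > 1`, any graph on the `b_j` (with up to `m(m-1)/2` edges) can be added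
without creating an edge between two vertices at distance `d`. Distances are certified by the
depth labelling, which grows by at most one along every edge and drops by exactly one from every
vertex other than `s` to one of its neighbours. -/

namespace SimpleGraph

variable {V : Type*}

structure IsDistLabeling (G : SimpleGraph V) (s : V) (f : V → ℕ) : Prop where
  map_root : f s = 0
  le_succ_of_adj : ∀ ⦃u v⦄, G.Adj u v → f v ≤ f u + 1
  exists_adj_succ_eq : ∀ v ≠ s, ∃ u, G.Adj u v ∧ f u + 1 = f v

namespace IsDistLabeling

variable {G : SimpleGraph V} {s : V} {f : V → ℕ}

theorem le_add_length (hf : G.IsDistLabeling s f) {u v : V} (p : G.Walk u v) :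
    f v ≤ f u + p.length := by
  induction p with
  | nil => simp
  | cons h _ ih => have := hf.le_succ_of_adj h; simp only [Walk.length_cons]; omega

theorem exists_walk_length_eq (hf : G.IsDistLabeling s f) (v : V) :
    ∃ p : G.Walk s v, p.length = f v := by
  induction hv : f v using Nat.strong_induction_on generalizing v with
  | _ n ih =>
    by_cases hvs : v = s
    · subst hvs
      exact ⟨.nil, by simp [hf.map_root, ← hv]⟩
    · obtain ⟨u, huv, hu⟩ := hf.exists_adj_succ_eq v hvs
      obtain ⟨p, hp⟩ := ih (f u) (by omega) u rfl
      exact ⟨p.concat huv, by simp [hp, ← hv, ← hu]⟩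

theorem connected (hf : G.IsDistLabeling s f) : G.Connected :=
  (connected_iff_exists_forall_reachable G).mpr
    ⟨s, fun v ↦ (hf.exists_walk_length_eq v).elim fun p _ ↦ ⟨p⟩⟩

theorem dist_eq (hf : G.IsDistLabeling s f) (v : V) : G.dist s v = f v := by
  obtain ⟨p, hp⟩ := hf.exists_walk_length_eq v
  obtain ⟨q, hq⟩ := (hf.connected s v).exists_walk_length_eq_dist
  refine le_antisymm (hp ▸ dist_le p) ?_
  simpa [hf.map_root, hq] using hf.le_add_length q

end IsDistLabeling

variable {W : Type*}

theorem ncard_edgeSet_map (f : V ↪ W) (G : SimpleGraph V) :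
    (G.map f).edgeSet.ncard = G.edgeSet.ncard := by
  rw [edgeSet_map, Set.ncard_image_of_injective _ f.sym2Map.injective]

theorem ncard_edgeSet_sup [Finite V] {G G' : SimpleGraph V} (h : Disjoint G.edgeSet G'.edgeSet) :
    (G ⊔ G').edgeSet.ncard = G.edgeSet.ncard + G'.edgeSet.ncard := by
  rw [edgeSet_sup, Set.ncard_union_eq h]

theorem disjoint_edgeSet_map {G : SimpleGraph W} (f : V ↪ W) (G' : SimpleGraph V)
    (h : ∀ ⦃u v⦄, G.Adj u v → u ∉ Set.range f ∨ v ∉ Set.range f) :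
    Disjoint G.edgeSet (G'.map f).edgeSet := by
  rw [Set.disjoint_left]
  rintro ⟨u, v⟩ huv ⟨-, u', v', -, rfl, rfl⟩
  simpa using h huv

theorem ncard_edgeSet_pathGraph (n : ℕ) : (pathGraph (n + 1)).edgeSet.ncard = n := by
  have : (pathGraph (n + 1)).edgeSet = Set.range fun i : Fin n ↦ s(i.castSucc, i.succ) := by
    refine Set.ext <| Sym2.ind fun u v ↦ ?_
    simp only [mem_edgeSet, pathGraph_adj, Set.mem_range, Sym2.eq_iff, Fin.ext_iff,
      Fin.val_castSucc, Fin.val_succ]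
    constructor
    · rintro (h | h)
      · exact ⟨⟨u, by omega⟩, Or.inl ⟨rfl, h⟩⟩
      · exact ⟨⟨v, by omega⟩, Or.inr ⟨rfl, h⟩⟩
    · rintro ⟨i, h | h⟩ <;> omega
  rw [this, Set.ncard_range_of_injective, Nat.card_eq_fintype_card, Fintype.card_fin]
  intro i j hij
  simp only [Sym2.eq_iff, Fin.ext_iff, Fin.val_castSucc, Fin.val_succ] at hij
  omega

theorem ncard_edgeSet_completeBipartiteGraph [Finite V] [Finite W] :
    (completeBipartiteGraph V W).edgeSet.ncard = Nat.card V * Nat.card W := by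
  rw [Set.ncard_def, encard_edgeSet_completeBipartiteGraph, ENat.card_eq_coe_natCard,
    ENat.card_eq_coe_natCard]
  rfl

theorem exists_ncard_edgeSet_eq [Fintype V] {k : ℕ} (hk : k ≤ (Fintype.card V).choose 2) :
    ∃ G : SimpleGraph V, G.edgeSet.ncard = k := by
  classical
  rw [← card_edgeFinset_top_eq_card_choose_two] at hk
  obtain ⟨F, hF, rfl⟩ := Finset.exists_subset_card_eq hk
  refine ⟨fromEdgeSet F, ?_⟩
  rw [edgeSet_fromEdgeSet, sdiff_eq_left.mpr, Set.ncard_coe_finset]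
  exact Set.disjoint_left.mpr fun e he ↦ not_isDiag_of_mem_edgeSet _ (mem_edgeFinset.mp (hF he))

variable (d m : ℕ)

/-- The graph of Proposition 1: `Sum.inl i` is the `i`-th vertex of the path `s = a_0, …, a_d`,
`Sum.inr j` is `b_j`, which is joined to `s`, and `H` is the graph on the `b_j`. -/
def pathWithCone (H : SimpleGraph (Fin m)) : SimpleGraph (Fin (d + 1) ⊕ Fin m) :=
  (pathGraph (d + 1)).map Function.Embedding.inl ⊔
    (completeBipartiteGraph Unit (Fin m)).map
      ((Function.Embedding.punit 0).sumMap (Function.Embedding.refl _)) ⊔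
    H.map Function.Embedding.inr

variable {d m} {H : SimpleGraph (Fin m)}

@[simp] theorem pathWithCone_adj_inl_inl {a b : Fin (d + 1)} :
    (pathWithCone d m H).Adj (.inl a) (.inl b) ↔ (pathGraph (d + 1)).Adj a b := by
  simp only [pathWithCone, sup_adj, map_adj]
  simp

@[simp] theorem pathWithCone_adj_inl_inr {a : Fin (d + 1)} {j : Fin m} :
    (pathWithCone d m H).Adj (.inl a) (.inr j) ↔ a = 0 := by
  simp only [pathWithCone, sup_adj, map_adj]
  simpa [Function.Embedding.punit] using eq_comm

@[simp] theorem pathWithCone_adj_inr_inl {j : Fin m} {a : Fin (d + 1)} :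
    (pathWithCone d m H).Adj (.inr j) (.inl a) ↔ a = 0 := by
  rw [adj_comm, pathWithCone_adj_inl_inr]

theorem ncard_edgeSet_pathWithCone :
    (pathWithCone d m H).edgeSet.ncard = d + m + H.edgeSet.ncard := by
  rw [pathWithCone, ncard_edgeSet_sup, ncard_edgeSet_sup, ncard_edgeSet_map, ncard_edgeSet_map,
    ncard_edgeSet_map, ncard_edgeSet_pathGraph, ncard_edgeSet_completeBipartiteGraph]
  · simp
  · refine disjoint_edgeSet_map _ _ ?_
    rintro _ _ ⟨-, a, b, hab, rfl, rfl⟩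
    by_contra! h
    simp [Function.Embedding.punit] at h
    exact hab.ne (h.1.symm.trans h.2)
  · refine disjoint_edgeSet_map _ _ ?_
    rintro u v ((⟨-, a, b, hab, rfl, rfl⟩) | (⟨-, a, b, hab, rfl, rfl⟩))
    · simp
    · rcases a with a | a <;> rcases b with b | b <;> simp_all

variable (d m) in
def pathWithConeDepth : Fin (d + 1) ⊕ Fin m → ℕ :=
  Sum.elim Fin.val fun _ ↦ 1

theorem isDistLabeling_pathWithCone :
    (pathWithCone d m H).IsDistLabeling (.inl 0) (pathWithConeDepth d m) where
  map_root := rfl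
  le_succ_of_adj := by
    rintro (a | a) (b | b) h <;> simp_all [pathWithConeDepth, pathGraph_adj]
    omega
  exists_adj_succ_eq := by
    rintro (a | j) h
    · induction a using Fin.cases with
      | zero => exact absurd rfl h
      | succ i => exact ⟨.inl i.castSucc, by simp [pathGraph_adj, pathWithConeDepth]⟩
    · exact ⟨.inl 0, by simp [pathWithConeDepth]⟩

theorem pathWithConeDepth_lt_or_lt_of_adj (hd : 1 < d) {u v : Fin (d + 1) ⊕ Fin m}
    (h : (pathWithCone d m H).Adj u v) :
    pathWithConeDepth d m u < d ∨ pathWithConeDepth d m v < d := by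
  rcases u with a | a <;> rcases v with b | b <;>
    simp [pathWithConeDepth, pathGraph_adj] at h ⊢ <;> omega

end SimpleGraph

open SimpleGraph in
theorem stmt0_general (d m x : ℕ) (hd : 1 < d) :
    ∃ (V : Type) (_ : Fintype V) (G : SimpleGraph V) (s : V),
      G.Connected ∧
      Fintype.card V = 1 + d + m ∧
      G.edgeSet.ncard = d + m + min x (m * (m - 1) / 2) ∧
      (∀ w : V, G.dist s w ≤ d) ∧
      (∃ w : V, G.dist s w = d) ∧
      (∀ u v : V, G.Adj u v → G.dist s u < d ∨ G.dist s v < d) := by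
  have hk : min x (m * (m - 1) / 2) ≤ (Fintype.card (Fin m)).choose 2 := by
    simp [Nat.choose_two_right]
  obtain ⟨H, hH⟩ := exists_ncard_edgeSet_eq hk
  have hf := isDistLabeling_pathWithCone (d := d) (H := H)
  refine ⟨_, inferInstance, pathWithCone d m H, .inl 0, hf.connected, by simp; omega,
    by rw [ncard_edgeSet_pathWithCone, hH], fun w ↦ ?_, ⟨.inl (Fin.last d), ?_⟩,
    fun u v huv ↦ ?_⟩
  · rw [hf.dist_eq]
    rcases w with a | a <;> simp [pathWithConeDepth] <;> omega
  · simp [hf.dist_eq, pathWithConeDepth]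
  · rw [hf.dist_eq, hf.dist_eq]
    exact pathWithConeDepth_lt_or_lt_of_adj hd huv

/-- For all integers `d > 1`, `m ≥ d` and `x` with `m ≤ x ≤ m²`, there exists a finite
connected simple graph `G` with a distinguished vertex `s` such that `G` has exactly
`1 + d + m` vertices and exactly `d + m + min x (m(m-1)/2)` edges, the eccentricity of
`s` in `G` equals `d`, and the ball `B_d(G,s)` equals `G`: every vertex is at distance
at most `d` from `s` and every edge has an endpoint at distance strictly less than `d`
from `s`. -/
theorem stmt0 (d m x : ℕ) (hd : 1 < d) (hm : d ≤ m) (hx1 : m ≤ x) (hx2 : x ≤ m ^ 2) :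
    ∃ (V : Type) (_ : Fintype V) (G : SimpleGraph V) (s : V),
      G.Connected ∧
      Fintype.card V = 1 + d + m ∧
      G.edgeSet.ncard = d + m + min x (m * (m - 1) / 2) ∧
      (∀ w : V, G.dist s w ≤ d) ∧
      (∃ w : V, G.dist s w = d) ∧
      (∀ u v : V, G.Adj u v → G.dist s u < d ∨ G.dist s v < d) :=
  stmt0_general d m x hd
end

section
/- Let G be a connected simple graph, s a vertex, and u, v two adjacent vertices of G, each adjacent to s and both different from s. Let G' be obtained from G by subdividing the edge {u,v}: delete the edge {u,v} and add a new vertex z together with the edges {u,z} and {z,v}. Then: (a) every vertex w of G satisfies dist_{G'}(s,w) = dist_G(s,w); (b) dist_{G'}(s,z) = 2; (c) if the eccentricity of s in G equals d for some integer d ≥ 2, then the eccentricity of s in G' equals d and the number of edges of the ball B_d(G',s) equals the number of edges of the ball B_d(G,s) plus 1. -/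
/-!
Collapsing the midpoint `z` onto `u` sends each edge of `G'` to an edge of `G` or to a single
vertex, so distances between old vertices cannot drop. Conversely a shortest path of `G` from `s`
only uses edges that increase the distance from `s`, and `{u, v}` is not one of them because
`u` and `v` are both at distance `1`; so it survives in `G'`. The midpoint is then at distance `2`,
and the ball of radius `d ≥ 2` loses the edge `{u, v}` and gains the two edges at `z`.
-/

/-- The set of edges of the ball `B_k(G,s)`: the edges of `G` having at least one
endpoint at distance strictly less than `k` from `s`. -/
def ballEdgeSet {V : Type*} (G : SimpleGraph V) (s : V) (k : ℕ) : Set (Sym2 V) :=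
  {e | e ∈ G.edgeSet ∧ ∃ a ∈ e, G.dist s a < k}

namespace SimpleGraph

variable {V W : Type*} {G : SimpleGraph V} {H : SimpleGraph W}

theorem Walk.exists_walk_length_le_of_adj_or_eq (f : V → W)
    (hf : ∀ a b, G.Adj a b → f a = f b ∨ H.Adj (f a) (f b)) {x y : V} :
    ∀ p : G.Walk x y, ∃ q : H.Walk (f x) (f y), q.length ≤ p.length
  | .nil => ⟨.nil, le_rfl⟩
  | .cons hxy p => by
    obtain ⟨q, hq⟩ := exists_walk_length_le_of_adj_or_eq f hf p
    rcases hf _ _ hxy with heq | hadj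
    · exact ⟨q.copy heq.symm rfl, by simp only [length_copy, length_cons]; omega⟩
    · exact ⟨.cons hadj q, by simpa using hq⟩

theorem Reachable.dist_le_of_adj_or_eq (f : V → W)
    (hf : ∀ a b, G.Adj a b → f a = f b ∨ H.Adj (f a) (f b)) {x y : V} (hxy : G.Reachable x y) :
    H.dist (f x) (f y) ≤ G.dist x y := by
  obtain ⟨p, hp⟩ := hxy.exists_walk_length_eq_dist
  obtain ⟨q, hq⟩ := p.exists_walk_length_le_of_adj_or_eq f hf
  exact hp ▸ (dist_le q).trans hq

/-- A geodesic from `w` back to `s` only uses edges that increase the distance from `s`. -/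
theorem Walk.exists_walk_length_eq_of_length_eq_dist (f : V → W) {s : V}
    (hf : ∀ x w, G.Adj x w → G.dist s x + 1 = G.dist s w → H.Adj (f x) (f w)) {w : V} :
    ∀ p : G.Walk w s, p.length = G.dist w s → ∃ q : H.Walk (f s) (f w), q.length = p.length
  | .nil, _ => ⟨.nil, rfl⟩
  | .cons (v := y) hwy p, hp => by
    have hwy_dist : G.dist w y = 1 := dist_eq_one_iff_adj.mpr hwy
    have hp' : p.length = G.dist y s := by
      have := hwy.reachable.dist_triangle_left s
      have := dist_le p
      simp only [length_cons] at hp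
      omega
    obtain ⟨q, hq⟩ := exists_walk_length_eq_of_length_eq_dist f hf p hp'
    have hsucc : G.dist s y + 1 = G.dist s w := by
      simp only [length_cons] at hp
      rw [dist_comm, ← hp', hp, dist_comm]
    exact ⟨q.concat (hf y w hwy.symm hsucc), by simp [hq]⟩

theorem Reachable.exists_walk_length_eq_dist_of_adj (f : V → W) {s w : V}
    (hf : ∀ x w, G.Adj x w → G.dist s x + 1 = G.dist s w → H.Adj (f x) (f w))
    (hsw : G.Reachable s w) : ∃ q : H.Walk (f s) (f w), q.length = G.dist s w := by
  obtain ⟨p, hp⟩ := hsw.symm.exists_walk_length_eq_dist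
  obtain ⟨q, hq⟩ := p.exists_walk_length_eq_of_length_eq_dist f hf hp
  exact ⟨q, by rw [hq, hp, dist_comm]⟩

end SimpleGraph

open SimpleGraph Sum

theorem Sym2.mk_inl_inl_mem_image_map_inl_iff {V W : Type*} {S : Set (Sym2 V)} {a b : V} :
    s(inl a, inl b) ∈ Sym2.map (inl : V → V ⊕ W) '' S ↔ s(a, b) ∈ S := by
  rw [← Sym2.map_mk, (Sym2.map.injective inl_injective).mem_set_image]

theorem Sym2.mk_inr_notMem_image_map_inl {V W : Type*} {S : Set (Sym2 V)} {x : V ⊕ W} {c : W} :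
    s(x, inr c) ∉ Sym2.map inl '' S := by
  rintro ⟨e, -, he⟩
  have := he ▸ Sym2.mem_mk_right x (inr c)
  simp [Sym2.mem_map] at this

/-- `G'` is `G` with the edge `{u, v}` subdivided by the midpoint `inr ()`. -/
structure IsEdgeSubdivision {V : Type*} (G : SimpleGraph V) (u v : V)
    (G' : SimpleGraph (V ⊕ Unit)) : Prop where
  adj_inl_inl : ∀ a b : V, G'.Adj (inl a) (inl b) ↔
    (G.Adj a b ∧ ¬(a = u ∧ b = v) ∧ ¬(a = v ∧ b = u))
  adj_inl_inr : ∀ a : V, G'.Adj (inl a) (inr ()) ↔ (a = u ∨ a = v)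

namespace IsEdgeSubdivision

variable {V : Type*} {G : SimpleGraph V} {u v s : V} {G' : SimpleGraph (V ⊕ Unit)}

theorem adj_inl_inl_of_adj (h : IsEdgeSubdivision G u v G') {a b : V} (hab : G.Adj a b)
    (hne : s(a, b) ≠ s(u, v)) : G'.Adj (inl a) (inl b) :=
  (h.adj_inl_inl a b).mpr ⟨hab, fun ⟨ha, hb⟩ => hne (by rw [ha, hb]),
    fun ⟨ha, hb⟩ => hne (by rw [ha, hb, Sym2.eq_swap])⟩

theorem edgeSet_eq (h : IsEdgeSubdivision G u v G') :
    G'.edgeSet = Sym2.map inl '' (G.edgeSet \ {s(u, v)}) ∪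
      {s(inl u, inr ()), s(inl v, inr ())} := by
  have hinr : ∀ x : V ⊕ Unit, s(x, inr ()) ∈ G'.edgeSet ↔
      s(x, inr ()) ∈ Sym2.map inl '' (G.edgeSet \ {s(u, v)}) ∪
        {s(inl u, inr ()), s(inl v, inr ())} := by
    intro x
    rw [Set.mem_union, or_iff_right Sym2.mk_inr_notMem_image_map_inl]
    rcases x with a | _
    · simp [h.adj_inl_inr]
    · simp
  ext e
  induction e using Sym2.ind with
  | _ x y =>
  rcases y with b | _
  · rcases x with a | _
    · rw [Set.mem_union, Sym2.mk_inl_inl_mem_image_map_inl_iff, mem_edgeSet, h.adj_inl_inl]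
      simp
    · rw [Sym2.eq_swap]
      exact hinr _
  · exact hinr x

/-- Collapsing the midpoint onto `u` turns walks of `G'` into walks of `G`. -/
theorem collapse_adj_or_eq (h : IsEdgeSubdivision G u v G') (huv : G.Adj u v) (x y : V ⊕ Unit)
    (hxy : G'.Adj x y) :
    Sum.elim id (fun _ => u) x = Sum.elim id (fun _ => u) y ∨
      G.Adj (Sum.elim id (fun _ => u) x) (Sum.elim id (fun _ => u) y) := by
  rcases x with a | ⟨⟩ <;> rcases y with b | ⟨⟩
  · exact .inr ((h.adj_inl_inl a b).mp hxy).1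
  · rcases (h.adj_inl_inr a).mp hxy with rfl | rfl
    exacts [.inl rfl, .inr huv.symm]
  · rcases (h.adj_inl_inr b).mp hxy.symm with rfl | rfl
    exacts [.inl rfl, .inr huv]
  · exact absurd hxy (G'.loopless.irrefl _)

theorem dist_inl (h : IsEdgeSubdivision G u v G') (hconn : G.Connected) (huv : G.Adj u v)
    (hsu : G.Adj s u) (hsv : G.Adj s v) (w : V) :
    G'.dist (inl s) (inl w) = G.dist s w := by
  have hlift : ∀ x y, G.Adj x y → G.dist s x + 1 = G.dist s y → G'.Adj (inl x) (inl y) := by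
    refine fun x y hxy hd => h.adj_inl_inl_of_adj hxy fun he => ?_
    have hx : G.dist s x = 1 ∧ G.dist s y = 1 := by
      rcases Sym2.eq_iff.mp he with ⟨rfl, rfl⟩ | ⟨rfl, rfl⟩ <;> simp [hsu, hsv]
    omega
  obtain ⟨q, hq⟩ := (hconn s w).exists_walk_length_eq_dist_of_adj inl hlift
  have hle := (dist_le q).trans_eq hq
  have hge := (Walk.reachable q).dist_le_of_adj_or_eq _ (h.collapse_adj_or_eq huv)
  simp only [elim_inl, id_eq] at hge
  omega

theorem dist_inr (h : IsEdgeSubdivision G u v G') (hsu : G.Adj s u) (hus : u ≠ s)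
    (hvs : v ≠ s) : G'.dist (inl s) (inr ()) = 2 := by
  have hsu' : G'.Adj (inl s) (inl u) :=
    h.adj_inl_inl_of_adj hsu fun he => by
      rcases Sym2.eq_iff.mp he with ⟨rfl, -⟩ | ⟨rfl, -⟩ <;> simp_all
  have huz : G'.Adj (inl u) (inr ()) := (h.adj_inl_inr u).mpr (.inl rfl)
  let p : G'.Walk (inl s) (inr ()) := .cons hsu' (.cons huz .nil)
  have hnadj : ¬G'.Adj (inl s) (inr ()) := by
    rw [h.adj_inl_inr]
    rintro (rfl | rfl) <;> simp_all
  have := (dist_le p).trans_eq (by rfl : p.length = 2)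
  have := p.reachable.one_lt_dist_of_ne_of_not_adj inl_ne_inr hnadj
  omega

theorem ballEdgeSet_eq (h : IsEdgeSubdivision G u v G') {d : ℕ}
    (hdist : ∀ w, G'.dist (inl s) (inl w) = G.dist s w)
    (hu : G.dist s u < d) (hv : G.dist s v < d) :
    ballEdgeSet G' (inl s) d = Sym2.map inl '' (ballEdgeSet G s d \ {s(u, v)}) ∪
      {s(inl u, inr ()), s(inl v, inr ())} := by
  change G'.edgeSet ∩ {e | ∃ a ∈ e, G'.dist (inl s) a < d} = _
  rw [h.edgeSet_eq, Set.union_inter_distrib_right, ← Set.image_inter_preimage]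
  congr 1
  · ext e
    simp [ballEdgeSet, hdist, and_right_comm]
  · rw [Set.inter_eq_left, Set.insert_subset_iff, Set.singleton_subset_iff]
    exact ⟨⟨inl u, by simp, by rwa [hdist]⟩, ⟨inl v, by simp, by rwa [hdist]⟩⟩

theorem ncard_ballEdgeSet [Finite V] (h : IsEdgeSubdivision G u v G') (huv : G.Adj u v) {d : ℕ}
    (hdist : ∀ w, G'.dist (inl s) (inl w) = G.dist s w)
    (hu : G.dist s u < d) (hv : G.dist s v < d) :
    (ballEdgeSet G' (inl s) d).ncard = (ballEdgeSet G s d).ncard + 1 := by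
  have huv_mem : s(u, v) ∈ ballEdgeSet G s d := ⟨huv, u, Sym2.mem_mk_left u v, hu⟩
  have hdisj : Disjoint (Sym2.map inl '' (ballEdgeSet G s d \ {s(u, v)}))
      {s(inl u, inr ()), s(inl v, inr ())} := by
    rw [Set.disjoint_left]
    rintro _ ⟨e, -, rfl⟩
    induction e using Sym2.ind
    simp
  rw [h.ballEdgeSet_eq hdist hu hv, Set.ncard_union_eq hdisj,
    Set.ncard_image_of_injective _ (Sym2.map.injective inl_injective),
    Set.ncard_pair (by simp [huv.ne]), ← Set.ncard_sdiff_singleton_add_one huv_mem]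

end IsEdgeSubdivision

/-- Subdividing an edge `{u,v}` (with `u,v ≠ s` both adjacent to `s` and to each other)
by a midpoint `z` does not change distances from `s` to old vertices, puts `z` at
distance `2` from `s`, and if the eccentricity of `s` was `d ≥ 2` then it stays `d`
while the number of edges of the ball `B_d` increases by exactly `1`. -/
theorem stmt1 {V : Type} [Fintype V] (G : SimpleGraph V) (hconn : G.Connected)
    (s u v : V) (huv : G.Adj u v) (hsu : G.Adj s u) (hsv : G.Adj s v)
    (hus : u ≠ s) (hvs : v ≠ s)
    (G' : SimpleGraph (V ⊕ Unit))
    (hadj : ∀ a b : V, G'.Adj (Sum.inl a) (Sum.inl b) ↔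
      (G.Adj a b ∧ ¬(a = u ∧ b = v) ∧ ¬(a = v ∧ b = u)))
    (hz : ∀ a : V, G'.Adj (Sum.inl a) (Sum.inr ()) ↔ (a = u ∨ a = v)) :
    (∀ w : V, G'.dist (Sum.inl s) (Sum.inl w) = G.dist s w) ∧
    G'.dist (Sum.inl s) (Sum.inr ()) = 2 ∧
    (∀ d : ℕ, 2 ≤ d →
      ((∀ w : V, G.dist s w ≤ d) ∧ (∃ w : V, G.dist s w = d)) →
      (((∀ w : V ⊕ Unit, G'.dist (Sum.inl s) w ≤ d) ∧
        (∃ w : V ⊕ Unit, G'.dist (Sum.inl s) w = d)) ∧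
       (ballEdgeSet G' (Sum.inl s) d).ncard = (ballEdgeSet G s d).ncard + 1)) := by
  have h : IsEdgeSubdivision G u v G' := ⟨hadj, hz⟩
  have hdist := h.dist_inl hconn huv hsu hsv
  have hdist_z := h.dist_inr hsu hus hvs
  refine ⟨hdist, hdist_z, fun d hd ⟨hecc, w, hw⟩ => ⟨⟨?_, inl w, (hdist w).trans hw⟩, ?_⟩⟩
  · rintro (a | _)
    · exact (hdist a).trans_le (hecc a)
    · exact hdist_z.trans_le hd
  · have hnear : ∀ x, G.Adj s x → G.dist s x < d := fun x hx => by
      rw [dist_eq_one_iff_adj.mpr hx]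
      omega
    exact h.ncard_ballEdgeSet huv hdist (hnear u hsu) (hnear v hsv)
end

section
/- Let G be a connected simple graph, s a vertex, f ≥ 0 and l ≥ 1 integers, and let M be a subgraph of G that contains (vertex- and edge-wise) the ball B_f(G,s). Suppose that for every vertex w of G with dist_G(s,w) = f and every vertex u of M that is incomplete in M, there is no path of length at most l from w to u inside M. Then M contains (vertex- and edge-wise) the ball B_{f+l}(G,s). -/
/-- The ball `B_k(G,s)` as a subgraph of `G`: its vertices are the vertices at distance
at most `k` from `s`, and its edges are the edges of `G` having at least one endpoint at
distance strictly less than `k` from `s`. -/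
def ballSubgraph {V : Type*} (G : SimpleGraph V) (s : V) (k : ℕ) : G.Subgraph where
  verts := {v | G.dist s v ≤ k}
  Adj a b := G.Adj a b ∧ (G.dist s a < k ∨ G.dist s b < k) ∧ G.dist s a ≤ k ∧ G.dist s b ≤ k
  adj_sub h := h.1
  edge_vert h := h.2.2.1
  symm := ⟨fun a b h => ⟨h.1.symm, h.2.1.symm, h.2.2.2, h.2.2.1⟩⟩

/-!
By induction on `j ≤ l`, every vertex `v` at distance `f + j` from `s` is reached inside `M`
by a walk of length `j` from the sphere of radius `f`: if `u` is the predecessor of `v` on a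
geodesic, the walk reaching `u` has length `j - 1 < l`, so `u` is complete in `M` and the
edge `uv` extends it. Hence all vertices of `B_{f+l}` lie in `M`, every vertex at distance in
`[f, f + l)` is complete, and the edges of `B_{f+l}` not covered by this already lie in `B_f`.
-/

theorem mem_ballSubgraph_verts {V : Type*} {G : SimpleGraph V} {s v : V} {k : ℕ} :
    v ∈ (ballSubgraph G s k).verts ↔ G.dist s v ≤ k :=
  Iff.rfl

namespace SimpleGraph

variable {V : Type*} {G : SimpleGraph V}

theorem exists_adj_dist_eq_of_dist_eq_succ {s v : V} {n : ℕ} (hv : G.dist s v = n + 1) :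
    ∃ u, G.Adj u v ∧ G.dist s u = n := by
  obtain ⟨p, hp⟩ :=
    (Reachable.of_dist_ne_zero (by omega : G.dist s v ≠ 0)).exists_walk_length_eq_dist
  obtain ⟨u, q, huv, rfl⟩ : ∃ u, ∃ (q : G.Walk s u) (huv : G.Adj u v), p = q.concat huv := by
    cases p with
    | nil => simp at hv
    | cons h q => exact Walk.exists_cons_eq_concat h q
  refine ⟨u, huv, le_antisymm ?_ ?_⟩
  · have := dist_le q
    rw [Walk.length_concat] at hp
    omega
  · have := huv.diff_dist_adj (u := s)
    omega

namespace Subgraph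

def IncompleteFarFromSphere (M : G.Subgraph) (s : V) (f l : ℕ) : Prop :=
  ∀ (w : V) (hw : w ∈ M.verts), G.dist s w = f →
    ∀ (u : V) (hu : u ∈ M.verts), (∃ v : V, G.Adj u v ∧ ¬ M.Adj u v) →
    ∀ p : M.coe.Walk ⟨w, hw⟩ ⟨u, hu⟩, l < p.length

variable {s : V} {f l : ℕ} {M : G.Subgraph}

theorem IncompleteFarFromSphere.adj_of_walk_length_lt
    (hfar : M.IncompleteFarFromSphere s f l)
    {w x y : V} {hw : w ∈ M.verts} {hx : x ∈ M.verts} (hwf : G.dist s w = f)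
    (p : M.coe.Walk ⟨w, hw⟩ ⟨x, hx⟩) (hp : p.length < l) (hxy : G.Adj x y) : M.Adj x y := by
  by_contra hxy'
  exact (hfar w hw hwf x hx ⟨y, hxy, hxy'⟩ p).not_gt hp

theorem exists_walk_from_sphere (hball : ballSubgraph G s f ≤ M)
    (hfar : M.IncompleteFarFromSphere s f l)
    {j : ℕ} (hj : j ≤ l) {v : V} (hv : G.dist s v = f + j) :
    ∃ (hvM : v ∈ M.verts) (w : V) (hw : w ∈ M.verts), G.dist s w = f ∧
      ∃ p : M.coe.Walk ⟨w, hw⟩ ⟨v, hvM⟩, p.length = j := by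
  induction j generalizing v with
  | zero =>
    have hvM : v ∈ M.verts := hball.1 (mem_ballSubgraph_verts.2 hv.le)
    exact ⟨hvM, v, hvM, hv, .nil, rfl⟩
  | succ j ih =>
    obtain ⟨u, huv, hu⟩ := exists_adj_dist_eq_of_dist_eq_succ hv
    obtain ⟨huM, w, hw, hwf, p, rfl⟩ := ih (by omega) hu
    have huvM : M.Adj u v := hfar.adj_of_walk_length_lt hwf p (by omega) huv
    exact ⟨huvM.snd_mem, w, hw, hwf, p.concat huvM, p.length_concat _⟩

theorem adj_of_dist_lt_add (hball : ballSubgraph G s f ≤ M)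
    (hfar : M.IncompleteFarFromSphere s f l)
    {a b : V} (hab : G.Adj a b) (ha : G.dist s a < f + l) : M.Adj a b := by
  by_cases haf : G.dist s a < f
  · have hb : G.dist s b ≤ f := by
      have := hab.diff_dist_adj (u := s)
      omega
    exact hball.2 ⟨hab, Or.inl haf, haf.le, hb⟩
  · obtain ⟨_, w, hw, hwf, p, hp⟩ :=
      exists_walk_from_sphere hball hfar (j := G.dist s a - f) (v := a) (by omega) (by omega)
    exact hfar.adj_of_walk_length_lt hwf p (by omega) hab

theorem mem_verts_of_dist_le_add (hball : ballSubgraph G s f ≤ M)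
    (hfar : M.IncompleteFarFromSphere s f l)
    {v : V} (hv : G.dist s v ≤ f + l) : v ∈ M.verts := by
  by_cases hvf : G.dist s v ≤ f
  · exact hball.1 (mem_ballSubgraph_verts.2 hvf)
  · exact (exists_walk_from_sphere hball hfar (j := G.dist s v - f) (v := v)
      (by omega) (by omega)).1

end Subgraph

end SimpleGraph

theorem stmt5_general {V : Type} (G : SimpleGraph V) (s : V)
    (f l : ℕ) (M : G.Subgraph) (hball : ballSubgraph G s f ≤ M)
    (hfar : ∀ (w : V) (hw : w ∈ M.verts), G.dist s w = f →
      ∀ (u : V) (hu : u ∈ M.verts), (∃ v : V, G.Adj u v ∧ ¬ M.Adj u v) →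
      ∀ p : M.coe.Walk ⟨w, hw⟩ ⟨u, hu⟩, l < p.length) :
    ballSubgraph G s (f + l) ≤ M := by
  refine ⟨fun v hv => M.mem_verts_of_dist_le_add hball hfar hv, ?_⟩
  rintro a b ⟨hab, ha | hb, -, -⟩
  · exact M.adj_of_dist_lt_add hball hfar hab ha
  · exact (M.adj_of_dist_lt_add hball hfar hab.symm hb).symm

/-- Let `M` be a subgraph of a connected simple graph `G` containing the ball `B_f(G,s)`,
with `l ≥ 1`. If for every vertex `w` at distance exactly `f` from `s` and every vertex
`u` of `M` that is incomplete in `M`, there is no walk of length at most `l` from `w` to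
`u` inside `M`, then `M` contains the ball `B_{f+l}(G,s)`. -/
theorem stmt5 {V : Type} (G : SimpleGraph V) (hconn : G.Connected) (s : V)
    (f l : ℕ) (hl : 1 ≤ l) (M : G.Subgraph) (hball : ballSubgraph G s f ≤ M)
    (hfar : ∀ (w : V) (hw : w ∈ M.verts), G.dist s w = f →
      ∀ (u : V) (hu : u ∈ M.verts), (∃ v : V, G.Adj u v ∧ ¬ M.Adj u v) →
      ∀ p : M.coe.Walk ⟨w, hw⟩ ⟨u, hu⟩, l < p.length) :
    ballSubgraph G s (f + l) ≤ M :=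
  stmt5_general G s f l M hball hfar
end

section
/- Let l ≥ 2 be an integer and let T be a finite tree rooted at a vertex v. Set D = max(1, ⌊l/4⌋), and let S be the set of vertices u of T at depth exactly D whose subtree has height h(u) satisfying h(u) + 1 ≥ ⌊l/4⌋. Let T' be the tree obtained from T by deleting, for each u ∈ S, all vertices of the subtree of T rooted at u (and all incident edges). Then T' is a tree containing v, and every vertex of T' is at distance at most ⌊l/2⌋ − 1 from v in T'. -/
/-- The vertex set of the subtree of the tree `T` (rooted at `v`) rooted at `u`:
the vertices `w` such that `u` lies on the unique path of `T` from `v` to `w`. -/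
def subtreeVerts {V : Type*} (T : SimpleGraph V) (v u : V) : Set V :=
  {w | T.dist v w = T.dist v u + T.dist u w}

/-- The set of vertices `u` at depth exactly `max 1 ⌊l/4⌋` whose rooted subtree has
height `h(u)` with `h(u) + 1 ≥ ⌊l/4⌋`: these subtrees are removed by `Prune(l)`. -/
def pruneSet {V : Type*} (T : SimpleGraph V) (v : V) (l : ℕ) : Set V :=
  {u | T.dist v u = max 1 (l / 4) ∧ ∃ w ∈ subtreeVerts T v u, l / 4 ≤ T.dist u w + 1}

/-- The vertices kept by `Prune(l)`: those in none of the removed subtrees. -/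
def keptVerts {V : Type*} (T : SimpleGraph V) (v : V) (l : ℕ) : Set V :=
  {w | ∀ u ∈ pruneSet T v l, w ∉ subtreeVerts T v u}

/-!
The kept vertex set contains, with each vertex, every vertex on its path to the root. Hence the
induced graph is connected and preserves depths, and it is acyclic as an induced subgraph of a
tree. A kept vertex deeper than `D = max 1 ⌊l/4⌋` hangs below an unpruned vertex of depth `D`,
whose subtree has height below `⌊l/4⌋ - 1`.
-/

open SimpleGraph

namespace SimpleGraph

variable {V : Type*} {G : SimpleGraph V}

lemma Walk.dist_getVert_of_length_eq_dist {u v : V} {p : G.Walk u v}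
    (hp : p.length = G.dist u v) {k : ℕ} (hk : k ≤ p.length) :
    G.dist u (p.getVert k) = k ∧ G.dist u v = G.dist u (p.getVert k) + G.dist (p.getVert k) v := by
  have htake := length_eq_dist_of_subwalk hp (p.isSubwalk_take k)
  have hdrop := length_eq_dist_of_subwalk hp (p.isSubwalk_drop k)
  simp only [Walk.take_length, Walk.drop_length] at htake hdrop
  omega

lemma Walk.dist_eq_add_of_mem_support {u v x : V} {p : G.Walk u v}
    (hp : p.length = G.dist u v) (hx : x ∈ p.support) :
    G.dist u v = G.dist u x + G.dist x v := by
  obtain ⟨k, rfl, hk⟩ := Walk.mem_support_iff_exists_getVert.mp hx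
  exact (p.dist_getVert_of_length_eq_dist hp hk).2

lemma Connected.exists_dist_eq_of_le_dist (hG : G.Connected) {u v : V} {k : ℕ}
    (hk : k ≤ G.dist u v) : ∃ x, G.dist u x = k ∧ G.dist u v = G.dist u x + G.dist x v := by
  obtain ⟨p, hp⟩ := hG.exists_walk_length_eq_dist u v
  exact ⟨p.getVert k, Walk.dist_getVert_of_length_eq_dist hp (hp ▸ hk)⟩

def IsGeodesicStar (G : SimpleGraph V) (v : V) (s : Set V) : Prop :=
  ∀ w ∈ s, ∀ x, G.dist v w = G.dist v x + G.dist x w → x ∈ s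

lemma IsGeodesicStar.exists_induce_walk_length_eq_dist (hG : G.Connected) {v : V} {s : Set V}
    (hs : G.IsGeodesicStar v s) (hv : v ∈ s) {w : V} (hw : w ∈ s) :
    ∃ q : (G.induce s).Walk ⟨v, hv⟩ ⟨w, hw⟩, q.length = G.dist v w := by
  obtain ⟨p, hp⟩ := hG.exists_walk_length_eq_dist v w
  refine ⟨p.induce s fun x hx => hs w hw x (Walk.dist_eq_add_of_mem_support hp hx), ?_⟩
  rw [← Walk.length_map (Embedding.induce s).toHom, Walk.map_induce]
  exact hp

lemma IsGeodesicStar.induce_connected (hG : G.Connected) {v : V} {s : Set V}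
    (hs : G.IsGeodesicStar v s) (hv : v ∈ s) : (G.induce s).Connected := by
  have hreach (w : s) : (G.induce s).Reachable ⟨v, hv⟩ w :=
    (hs.exists_induce_walk_length_eq_dist hG hv w.2).elim fun q _ => q.reachable
  exact (connected_iff _).mpr ⟨fun a b => (hreach a).symm.trans (hreach b), ⟨⟨v, hv⟩⟩⟩

lemma IsGeodesicStar.induce_dist_le (hG : G.Connected) {v : V} {s : Set V}
    (hs : G.IsGeodesicStar v s) (hv : v ∈ s) {w : V} (hw : w ∈ s) :
    (G.induce s).dist ⟨v, hv⟩ ⟨w, hw⟩ ≤ G.dist v w :=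
  (hs.exists_induce_walk_length_eq_dist hG hv hw).elim fun q hq => hq ▸ dist_le q

end SimpleGraph

section Prune

variable {V : Type*} {T : SimpleGraph V} {v : V} {l : ℕ}

lemma root_mem_keptVerts : v ∈ keptVerts T v l := by
  intro u hu hvu
  have hdepth : 1 ≤ T.dist v u := hu.1 ▸ le_max_left 1 (l / 4)
  simp only [subtreeVerts, Set.mem_ofPred_eq, dist_self] at hvu
  omega

lemma isGeodesicStar_keptVerts (hT : T.Connected) : T.IsGeodesicStar v (keptVerts T v l) := by
  intro w hw x hx u hu hxu
  refine hw u hu ?_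
  have hxu : T.dist v x = T.dist v u + T.dist u x := hxu
  have := hT.dist_triangle (u := u) (v := x) (w := w)
  have := hT.dist_triangle (u := v) (v := u) (w := w)
  show T.dist v w = T.dist v u + T.dist u w
  omega

lemma dist_add_one_le_of_mem_keptVerts (hT : T.Connected) (hl : 2 ≤ l) {w : V}
    (hw : w ∈ keptVerts T v l) : T.dist v w + 1 ≤ l / 2 := by
  have hmax := max_choice 1 (l / 4)
  by_cases hshallow : T.dist v w < max 1 (l / 4)
  · omega
  obtain ⟨u, hu, hwu⟩ := hT.exists_dist_eq_of_le_dist (not_lt.mp hshallow)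
  have hheight : T.dist u w + 1 < l / 4 := by
    by_contra! hge
    exact hw u ⟨hu, w, hwu, hge⟩ hwu
  omega

end Prune

theorem stmt8_general {V : Type} (T : SimpleGraph V) (hT : T.IsTree) (v : V)
    (l : ℕ) (hl : 2 ≤ l) :
    ∃ hv : v ∈ keptVerts T v l,
      (T.induce (keptVerts T v l)).IsTree ∧
      ∀ w : keptVerts T v l, (T.induce (keptVerts T v l)).dist ⟨v, hv⟩ w + 1 ≤ l / 2 := by
  have hv : v ∈ keptVerts T v l := root_mem_keptVerts
  have hstar : T.IsGeodesicStar v (keptVerts T v l) := isGeodesicStar_keptVerts hT.connected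
  refine ⟨hv, ⟨hstar.induce_connected hT.connected hv, hT.isAcyclic.induce _⟩, ?_⟩
  rintro ⟨w, hw⟩
  have := hstar.induce_dist_le hT.connected hv hw
  have := dist_add_one_le_of_mem_keptVerts hT.connected hl hw
  omega

/-- Height guarantee of `Prune(l)`: for `l ≥ 2` and a finite tree `T` rooted at `v`,
after removing the subtree rooted at each vertex `u` of depth exactly `max 1 ⌊l/4⌋`
whose subtree height `h(u)` satisfies `h(u) + 1 ≥ ⌊l/4⌋`, the remaining graph `T'` is a
tree containing `v` in which every vertex is at distance at most `⌊l/2⌋ - 1` from `v`. -/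
theorem stmt8 {V : Type} [Fintype V] (T : SimpleGraph V) (hT : T.IsTree) (v : V)
    (l : ℕ) (hl : 2 ≤ l) :
    ∃ hv : v ∈ keptVerts T v l,
      (T.induce (keptVerts T v l)).IsTree ∧
      ∀ w : keptVerts T v l, (T.induce (keptVerts T v l)).dist ⟨v, hv⟩ w + 1 ≤ l / 2 :=
  stmt8_general T hT v l hl
end

section
/- Let l ≥ 2 be an integer and let T be a finite tree rooted at a vertex v. Set D = max(1, ⌊l/4⌋), and let S be the set of vertices u of T at depth exactly D whose subtree has height h(u) satisfying h(u) + 1 ≥ ⌊l/4⌋. Let T' be the tree obtained from T by deleting, for each u ∈ S, all vertices of the subtree of T rooted at u (and all incident edges). Then for each u ∈ S the subtree of T rooted at u has at least ⌊l/8⌋ edges, and if S is nonempty then T' also has at least ⌊l/8⌋ edges. -/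
/-- The edges of `T` having both endpoints in the vertex set `W`. -/
def edgesWithin {V : Type*} (T : SimpleGraph V) (W : Set V) : Set (Sym2 V) :=
  {e | e ∈ T.edgeSet ∧ ∀ a ∈ e, a ∈ W}

namespace SimpleGraph

variable {V : Type*} {G : SimpleGraph V} {a b x : V}

lemma Walk.dist_add_dist_of_mem_support {p : G.Walk a b} (hp : p.length = G.dist a b)
    (hx : x ∈ p.support) : G.dist a x + G.dist x b = G.dist a b := by
  classical
  rw [← length_eq_dist_of_subwalk hp (p.isSubwalk_takeUntil hx),
    ← length_eq_dist_of_subwalk hp (p.isSubwalk_dropUntil hx), ← hp, ← length_append,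
    p.take_spec hx]

lemma Walk.dist_getVert {p : G.Walk a b} (hp : p.length = G.dist a b) {k : ℕ}
    (hk : k ≤ p.length) : G.dist a (p.getVert k) = k := by
  rw [← length_eq_dist_of_subwalk hp (p.isSubwalk_take k), Walk.take_length]
  exact min_eq_left hk

lemma dist_le_ncard_edgesWithin [Finite V] {W : Set V} (hab : G.Reachable a b)
    (hW : ∀ x, G.dist a x + G.dist x b = G.dist a b → x ∈ W) :
    G.dist a b ≤ (edgesWithin G W).ncard := by
  classical
  obtain ⟨p, hpath, hp⟩ := hab.exists_path_of_dist
  have hsub : (p.edges.toFinset : Set (Sym2 V)) ⊆ edgesWithin G W := by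
    intro e he
    rw [Finset.mem_coe, List.mem_toFinset] at he
    exact ⟨p.edges_subset_edgeSet he, fun y hy ↦
      hW y (p.dist_add_dist_of_mem_support hp (p.mem_support_of_mem_edges he hy))⟩
  calc G.dist a b = p.edges.toFinset.card := by
        rw [List.toFinset_card_of_nodup hpath.edges_nodup, Walk.length_edges, hp]
    _ ≤ (edgesWithin G W).ncard := by
        rw [← Set.ncard_coe_finset]
        exact Set.ncard_le_ncard hsub (Set.toFinite _)

end SimpleGraph

open SimpleGraph

variable {V : Type*} {T : SimpleGraph V} {v u w x : V} {l : ℕ}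

lemma mem_subtreeVerts_of_dist_add_dist (hT : T.Connected) (hw : w ∈ subtreeVerts T v u)
    (hx : T.dist u x + T.dist x w = T.dist u w) : x ∈ subtreeVerts T v u := by
  have hvx : T.dist v x ≤ T.dist v u + T.dist u x := hT.dist_triangle
  have hvw : T.dist v w ≤ T.dist v x + T.dist x w := hT.dist_triangle
  have hw' : T.dist v w = T.dist v u + T.dist u w := hw
  show T.dist v x = T.dist v u + T.dist u x
  omega

lemma mem_keptVerts_of_dist_lt (hx : T.dist v x < max 1 (l / 4)) : x ∈ keptVerts T v l := by
  intro u hu hxu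
  have hxu' : T.dist v x = T.dist v u + T.dist u x := hxu
  have hdepth : T.dist v u = max 1 (l / 4) := hu.1
  omega

lemma div_eight_le_ncard_edgesWithin_subtreeVerts [Finite V] (hT : T.Connected)
    (hu : u ∈ pruneSet T v l) : l / 8 ≤ (edgesWithin T (subtreeVerts T v u)).ncard := by
  obtain ⟨-, w, hw, hlw⟩ := hu
  calc l / 8 ≤ T.dist u w := by omega
    _ ≤ _ := dist_le_ncard_edgesWithin (hT u w) fun x hx ↦
      mem_subtreeVerts_of_dist_add_dist hT hw hx

lemma div_eight_le_ncard_edgesWithin_keptVerts [Finite V] (hT : T.Connected)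
    (hu : u ∈ pruneSet T v l) : l / 8 ≤ (edgesWithin T (keptVerts T v l)).ncard := by
  obtain ⟨p, hp⟩ := hT.exists_walk_length_eq_dist v u
  have hdepth : p.length = max 1 (l / 4) := hp.trans hu.1
  have hy : T.dist v (p.getVert (p.length - 1)) = max 1 (l / 4) - 1 := by
    rw [p.dist_getVert hp (Nat.sub_le _ _), hdepth]
  calc l / 8 ≤ T.dist v (p.getVert (p.length - 1)) := by omega
    _ ≤ _ := dist_le_ncard_edgesWithin (hT _ _) fun x hx ↦
      mem_keptVerts_of_dist_lt (by omega)

theorem stmt9_general {V : Type} [Fintype V] (T : SimpleGraph V) (hT : T.IsTree) (v : V)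
    (l : ℕ) :
    (∀ u ∈ pruneSet T v l, l / 8 ≤ (edgesWithin T (subtreeVerts T v u)).ncard) ∧
    ((pruneSet T v l).Nonempty → l / 8 ≤ (edgesWithin T (keptVerts T v l)).ncard) :=
  ⟨fun _ hu ↦ div_eight_le_ncard_edgesWithin_subtreeVerts hT.connected hu,
    fun ⟨_, hu⟩ ↦ div_eight_le_ncard_edgesWithin_keptVerts hT.connected hu⟩

/-- Size guarantee of `Prune(l)`: for `l ≥ 2` and a finite tree `T` rooted at `v`, each
removed subtree has at least `⌊l/8⌋` edges, and if some subtree is removed then the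
remaining tree `T'` also has at least `⌊l/8⌋` edges. -/
theorem stmt9 {V : Type} [Fintype V] (T : SimpleGraph V) (hT : T.IsTree) (v : V)
    (l : ℕ) (hl : 2 ≤ l) :
    (∀ u ∈ pruneSet T v l, l / 8 ≤ (edgesWithin T (subtreeVerts T v u)).ncard) ∧
    ((pruneSet T v l).Nonempty → l / 8 ≤ (edgesWithin T (keptVerts T v l)).ncard) :=
  stmt9_general T hT v l
end

section
/- Consider integer sequences (floor_k), (ceil_k), (l_k) for k = 0,…,n satisfying: l_0 = ⌊(ceil_0 − floor_0)/2⌋, and for every k < n either (true step) floor_{k+1} = floor_k + l_k, ceil_{k+1} = ceil_k and l_{k+1} = ⌊(ceil_{k+1} − floor_{k+1})/2⌋, or (false step) floor_{k+1} = floor_k, ceil_{k+1} = floor_k + 2·l_k − 1 and l_{k+1} = ⌊l_k/2⌋; assume moreover l_k ≥ 1 for all k ≤ n. Then for every index i with 1 ≤ i ≤ n, either i ≥ n − 6, or there exists c ∈ {1,2,3} such that 8·l_{i+c} ≤ 7·l_i. -/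
/-!
Write `d = ceil - floor` for the width of the search interval. After any step `d ≤ 4l + 1`,
so a true step gives `2l' ≤ 3l + 1`. A false step halves `l`, while a true step leaves a
narrow state `d ≤ 2l + 1`, from which the next step gives `2l' ≤ l + 1`. Hence, starting from
`l_i ≥ 2`, either some step among the next two halves `l`, or two narrow steps follow and
`8 l_{i+3} ≤ 3 l_i + 7 ≤ 7 l_i`. If `l_i = 1` then `d_i ≤ 5`; as long as `l` stays positive the
width decreases strictly and stays at least `2l ≥ 2`, so the run stops within four steps.
-/

/-- The left disjunct is a true step of `Search`, the right one a false step. -/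
def SearchStep (f c l f' c' l' : ℤ) : Prop :=
  (f' = f + l ∧ c' = c ∧ l' = (c' - f') / 2) ∨ (f' = f ∧ c' = f + 2 * l - 1 ∧ l' = l / 2)

namespace SearchStep

variable {f c l f' c' l' : ℤ}

theorem two_mul_le_of_width_le (h : SearchStep f c l f' c' l') {m : ℤ}
    (hw : c - f ≤ l + m) (hl : l ≤ m) : 2 * l' ≤ m := by
  unfold SearchStep at h
  omega

theorem halves_or_narrow (h : SearchStep f c l f' c' l') :
    2 * l' ≤ l ∨ c' - f' ≤ 2 * l' + 1 := by
  unfold SearchStep at h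
  omega

theorem width_le_four_mul_add_one (h : SearchStep f c l f' c' l') (hl' : 0 ≤ l') :
    c' - f' ≤ 4 * l' + 1 := by
  unfold SearchStep at h
  omega

theorem two_mul_le_width (h : SearchStep f c l f' c' l') (hl' : 1 ≤ l') :
    2 * l' ≤ c' - f' := by
  unfold SearchStep at h
  omega

theorem width_lt (h : SearchStep f c l f' c' l') (hl : 1 ≤ l) (hw : 2 * l ≤ c - f) :
    c' - f' < c - f := by
  unfold SearchStep at h
  omega

end SearchStep

def IsSearchRun (n : ℕ) (floor ceil l : ℕ → ℤ) : Prop :=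
  ∀ k < n, SearchStep (floor k) (ceil k) (l k) (floor (k + 1)) (ceil (k + 1)) (l (k + 1))

namespace IsSearchRun

variable {n : ℕ} {floor ceil l : ℕ → ℤ}

theorem width_le_four_mul_add_one (h : IsSearchRun n floor ceil l) {k : ℕ} (hk : 0 < k)
    (hkn : k ≤ n) (hl : 0 ≤ l k) : ceil k - floor k ≤ 4 * l k + 1 := by
  obtain ⟨j, rfl⟩ : ∃ j, k = j + 1 := ⟨k - 1, by omega⟩
  exact (h j (by omega)).width_le_four_mul_add_one hl

theorem two_mul_le_width (h : IsSearchRun n floor ceil l) {k : ℕ} (hk : 0 < k) (hkn : k ≤ n)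
    (hl : 1 ≤ l k) : 2 * l k ≤ ceil k - floor k := by
  obtain ⟨j, rfl⟩ : ∃ j, k = j + 1 := ⟨k - 1, by omega⟩
  exact (h j (by omega)).two_mul_le_width hl

theorem width_add_le (h : IsSearchRun n floor ceil l) (hpos : ∀ k ≤ n, 1 ≤ l k) {i : ℕ}
    (hi : 0 < i) : ∀ j, i + j ≤ n → ceil (i + j) - floor (i + j) + j ≤ ceil i - floor i
  | 0, _ => by simp
  | j + 1, hj => by
    have ih := width_add_le h hpos hi j (by omega)
    have hlt := (h (i + j) (by omega)).width_lt (hpos _ (by omega))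
      (h.two_mul_le_width (by omega) (by omega) (hpos _ (by omega)))
    push_cast
    rw [← Nat.add_assoc]
    omega

theorem lt_add_four_of_eq_one (h : IsSearchRun n floor ceil l) (hpos : ∀ k ≤ n, 1 ≤ l k)
    {i : ℕ} (hi : 0 < i) (hin : i ≤ n) (hl : l i = 1) : n < i + 4 := by
  by_contra! hn
  have hw := h.width_le_four_mul_add_one hi hin (by omega)
  have hshrink := h.width_add_le hpos hi 4 hn
  have hl4 := hpos _ hn
  have hw4 := h.two_mul_le_width (by omega) hn hl4
  omega

theorem exists_contraction (h : IsSearchRun n floor ceil l) {i : ℕ} (hi : 0 < i)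
    (hin : i + 3 ≤ n) (hl : 2 ≤ l i) :
    ∃ c ∈ ({1, 2, 3} : Set ℕ), 8 * l (i + c) ≤ 7 * l i := by
  obtain ⟨j, rfl⟩ : ∃ j, i = j + 1 := ⟨i - 1, by omega⟩
  have hw := h.width_le_four_mul_add_one hi (by omega) (by omega)
  obtain h1 | hw1 : 2 * l (j + 2) ≤ l (j + 1) ∨
      ceil (j + 2) - floor (j + 2) ≤ 2 * l (j + 2) + 1 :=
    (h (j + 1) (by omega)).halves_or_narrow
  · exact ⟨1, by simp, show 8 * l (j + 2) ≤ 7 * l (j + 1) by omega⟩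
  have h1 : 2 * l (j + 2) ≤ 3 * l (j + 1) + 1 :=
    (h (j + 1) (by omega)).two_mul_le_of_width_le (by omega) (by omega)
  obtain h2 | hw2 : 2 * l (j + 3) ≤ l (j + 2) ∨
      ceil (j + 3) - floor (j + 3) ≤ 2 * l (j + 3) + 1 :=
    (h (j + 2) (by omega)).halves_or_narrow
  · exact ⟨2, by simp, show 8 * l (j + 3) ≤ 7 * l (j + 1) by omega⟩
  have h2 : 2 * l (j + 3) ≤ l (j + 2) + 1 :=
    (h (j + 2) (by omega)).two_mul_le_of_width_le (by omega) (by omega)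
  have h3 : 2 * l (j + 4) ≤ l (j + 3) + 1 :=
    (h (j + 3) (by omega)).two_mul_le_of_width_le (by omega) (by omega)
  exact ⟨3, by simp, show 8 * l (j + 4) ≤ 7 * l (j + 1) by omega⟩

end IsSearchRun

theorem stmt10_general (n : ℕ) (floor ceil l : ℕ → ℤ)
    (hstep : ∀ k < n,
      (floor (k + 1) = floor k + l k ∧ ceil (k + 1) = ceil k ∧
        l (k + 1) = (ceil (k + 1) - floor (k + 1)) / 2) ∨
      (floor (k + 1) = floor k ∧ ceil (k + 1) = floor k + 2 * l k - 1 ∧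
        l (k + 1) = l k / 2))
    (hpos : ∀ k ≤ n, 1 ≤ l k) :
    ∀ i : ℕ, 1 ≤ i → i ≤ n →
      n ≤ i + 6 ∨ ∃ c ∈ ({1, 2, 3} : Set ℕ), 8 * l (i + c) ≤ 7 * l i := by
  intro i hi hin
  have hrun : IsSearchRun n floor ceil l := hstep
  rcases (hpos i hin).eq_or_lt with hl | hl
  · have := hrun.lt_add_four_of_eq_one hpos hi hin hl.symm
    exact Or.inl (by omega)
  by_cases hn : n ≤ i + 6
  · exact Or.inl hn
  exact Or.inr (hrun.exists_contraction hi (by omega) hl)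

/-- Key claim in the analysis of procedure `Search`: for integer sequences `floor`,
`ceil`, `l` evolving by the dichotomic rule (a "true step" sets
`floor ← floor + l`, `l ← ⌊(ceil - floor)/2⌋`; a "false step" sets
`ceil ← floor + 2l - 1`, `l ← ⌊l/2⌋`), with `l_k ≥ 1` throughout, every index
`1 ≤ i ≤ n` satisfies `i ≥ n - 6` or `8·l_{i+c} ≤ 7·l_i` for some `c ∈ {1,2,3}`. -/
theorem stmt10 (n : ℕ) (floor ceil l : ℕ → ℤ)
    (h0 : l 0 = (ceil 0 - floor 0) / 2)
    (hstep : ∀ k < n,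
      (floor (k + 1) = floor k + l k ∧ ceil (k + 1) = ceil k ∧
        l (k + 1) = (ceil (k + 1) - floor (k + 1)) / 2) ∨
      (floor (k + 1) = floor k ∧ ceil (k + 1) = floor k + 2 * l k - 1 ∧
        l (k + 1) = l k / 2))
    (hpos : ∀ k ≤ n, 1 ≤ l k) :
    ∀ i : ℕ, 1 ≤ i → i ≤ n →
      n ≤ i + 6 ∨ ∃ c ∈ ({1, 2, 3} : Set ℕ), 8 * l (i + c) ≤ 7 * l i :=
  stmt10_general n floor ceil l hstep hpos
end

section
/- There exists a constant C > 0 with the following property. Consider integer sequences (floor_k), (ceil_k), (l_k) for k = 0,…,n satisfying: floor_0 ≤ ceil_0, l_0 = ⌊(ceil_0 − floor_0)/2⌋, and for every k < n either (true step) floor_{k+1} = floor_k + l_k, ceil_{k+1} = ceil_k and l_{k+1} = ⌊(ceil_{k+1} − floor_{k+1})/2⌋, or (false step) floor_{k+1} = floor_k, ceil_{k+1} = floor_k + 2·l_k − 1 and l_{k+1} = ⌊l_k/2⌋; assume moreover l_k ≥ 1 for all k ≤ n. Then n ≤ C·(log₂(ceil_0 − floor_0 + 2) + 1). -/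
/-!
Only the width `d = ceil - floor` and the step `l` matter. Every step leaves `(d, l)`
balanced, `2l - 1 ≤ d ≤ 4l + 1`, and on balanced states with `l ≥ 1` the potential `2d + l`
shrinks by a factor `19/20` per step. It starts below `3(d₀ + 2)` and stays at least `3`,
so `(20/19)ⁿ ≤ d₀ + 2`.
-/

namespace DichotomicSearch

def WidthStep (d l d' l' : ℤ) : Prop :=
  (d' = d - l ∧ l' = d' / 2) ∨ (d' = 2 * l - 1 ∧ l' = l / 2)

def Balanced (d l : ℤ) : Prop :=
  d ≤ 4 * l + 1 ∧ 2 * l ≤ d + 1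

theorem widthStep_sub {f c l f' c' l' : ℤ}
    (h : (f' = f + l ∧ c' = c ∧ l' = (c' - f') / 2) ∨
      (f' = f ∧ c' = f + 2 * l - 1 ∧ l' = l / 2)) :
    WidthStep (c - f) l (c' - f') l' := by
  unfold WidthStep; omega

theorem balanced_half {d : ℤ} (hd : 0 ≤ d) : Balanced d (d / 2) := by
  unfold Balanced; omega

theorem WidthStep.balanced {d l d' l' : ℤ} (hs : WidthStep d l d' l') (hl' : 0 ≤ l') :
    Balanced d' l' := by
  unfold WidthStep Balanced at *; omega

theorem WidthStep.potential_contract {d l d' l' : ℤ} (hs : WidthStep d l d' l')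
    (hb : Balanced d l) (hl : 1 ≤ l) :
    20 * (2 * d' + l') ≤ 19 * (2 * d + l) := by
  unfold WidthStep Balanced at *; omega

theorem Balanced.three_le_potential {d l : ℤ} (hb : Balanced d l) (hl : 1 ≤ l) :
    3 ≤ 2 * d + l := by
  unfold Balanced at hb; omega

theorem Balanced.potential_le {d l : ℤ} (hb : Balanced d l) :
    2 * d + l ≤ 3 * (d + 2) := by
  unfold Balanced at hb; omega

theorem pow_le_width_add_two {n : ℕ} {d l : ℕ → ℤ} (h0 : Balanced (d 0) (l 0))
    (hstep : ∀ k < n, WidthStep (d k) (l k) (d (k + 1)) (l (k + 1)))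
    (hl : ∀ k ≤ n, 1 ≤ l k) :
    (20 / 19 : ℝ) ^ n ≤ d 0 + 2 := by
  have hbal : ∀ k ≤ n, Balanced (d k) (l k) := by
    rintro (_ | k) hk
    · exact h0
    · exact (hstep k hk).balanced (zero_le_one.trans (hl _ hk))
  set u : ℕ → ℝ := fun k => 2 * d k + l k
  have hdecay : u n ≤ (19 / 20) ^ n * u 0 := le_geom (by norm_num) n fun k hk => by
    have h : (20 * u (k + 1) : ℝ) ≤ 19 * u k := by
      simp only [u]
      exact_mod_cast (hstep k hk).potential_contract (hbal k hk.le) (hl k hk.le)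
    linarith
  have hu_n : 3 ≤ u n := by
    simp only [u]
    exact_mod_cast (hbal n le_rfl).three_le_potential (hl n le_rfl)
  have hu_0 : u 0 ≤ 3 * ((d 0 : ℝ) + 2) := by
    simp only [u]
    exact_mod_cast h0.potential_le
  have hone : 1 ≤ (19 / 20 : ℝ) ^ n * (d 0 + 2) := by
    have := mul_le_mul_of_nonneg_left hu_0 (pow_nonneg (by norm_num : (0 : ℝ) ≤ 19 / 20) n)
    linarith
  calc (20 / 19 : ℝ) ^ n ≤ (20 / 19) ^ n * ((19 / 20) ^ n * (d 0 + 2)) :=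
        le_mul_of_one_le_right (by positivity) hone
    _ = d 0 + 2 := by rw [← mul_assoc, ← mul_pow]; norm_num

end DichotomicSearch

theorem Real.natCast_le_logb_of_pow_le {r x : ℝ} {n : ℕ} (hr : 1 < r) (h : r ^ n ≤ x) :
    (n : ℝ) ≤ Real.logb r x := by
  rwa [Real.le_logb_iff_rpow_le hr (lt_of_lt_of_le (by positivity) h), Real.rpow_natCast]

open DichotomicSearch in
/-- Claim `searchcl4` of the paper: there is a constant `C > 0` such that for any
integer sequences `floor`, `ceil`, `l` evolving by the dichotomic rule of procedure
`Search` (a "true step" sets `floor ← floor + l`, `l ← ⌊(ceil - floor)/2⌋`; a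
"false step" sets `ceil ← floor + 2l - 1`, `l ← ⌊l/2⌋`), with `floor 0 ≤ ceil 0` and
`l_k ≥ 1` throughout, the number `n` of steps satisfies
`n ≤ C·(log₂(ceil 0 - floor 0 + 2) + 1)`. -/
theorem stmt11 :
    ∃ C : ℝ, 0 < C ∧
      ∀ (n : ℕ) (floor ceil l : ℕ → ℤ),
        floor 0 ≤ ceil 0 →
        l 0 = (ceil 0 - floor 0) / 2 →
        (∀ k < n,
          (floor (k + 1) = floor k + l k ∧ ceil (k + 1) = ceil k ∧
            l (k + 1) = (ceil (k + 1) - floor (k + 1)) / 2) ∨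
          (floor (k + 1) = floor k ∧ ceil (k + 1) = floor k + 2 * l k - 1 ∧
            l (k + 1) = l k / 2)) →
        (∀ k ≤ n, 1 ≤ l k) →
        (n : ℝ) ≤ C * (Real.logb 2 ((ceil 0 : ℝ) - (floor 0 : ℝ) + 2) + 1) := by
  have hr : (1 : ℝ) < 20 / 19 := by norm_num
  have hC : 0 < Real.logb (20 / 19) 2 := Real.logb_pos hr one_lt_two
  refine ⟨Real.logb (20 / 19) 2, hC, ?_⟩
  intro n floor ceil l h0 hl0 hstep hl
  have hbal : Balanced (ceil 0 - floor 0) (l 0) := hl0 ▸ balanced_half (sub_nonneg.2 h0)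
  have hpow := pow_le_width_add_two (d := fun k => ceil k - floor k) hbal
    (fun k hk => widthStep_sub (hstep k hk)) hl
  push_cast at hpow
  have hlogb : 0 ≤ Real.logb 2 ((ceil 0 : ℝ) - floor 0 + 2) :=
    Real.logb_nonneg one_lt_two (le_trans (one_le_pow₀ hr.le) hpow)
  calc (n : ℝ) ≤ Real.logb (20 / 19) ((ceil 0 : ℝ) - floor 0 + 2) :=
        Real.natCast_le_logb_of_pow_le hr hpow
    _ = Real.logb (20 / 19) 2 * Real.logb 2 ((ceil 0 : ℝ) - floor 0 + 2) :=
        (Real.mul_logb (by norm_num) (by norm_num) (by norm_num)).symm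
    _ ≤ _ := mul_le_mul_of_nonneg_left (by linarith) hC.le
end
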